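/- Let f : M → M be a hyperbolic homeomorphism with local product structure on a compact metric space (M,d) with constants C, ε, λ, let A : M → GL(d,ℝ) be ν-Hölder continuous, α an automorphism of GL(d,ℝ), suppose the α-twisted cocycle A_α is fiber-bunched with constants ρ, θ, and let δ > 0 satisfy 5ρ + 2θ + δ < λν. Then there exists a constant C' > 0 such that for every y ∈ M, every z ∈ W^s_ε(y) and every integer n ≥ 0, ‖α^{-(n+1)}(A_α^{n+1}(z)^{-1} A_α^{n+1}(y)) − α^{-n}(A_α^n(z)^{-1} A_α^n(y))‖ ≤ C' e^{(5ρ + 2θ + δ − νλ)n} d(z,y)^ν. In particular, since 5ρ + 2θ + δ − νλ < 0, the sequence (α^{-n}(A_α^n(z)^{-1} A_α^n(y)))_n is Cauchy. -/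

import Mathlib

open scoped Matrix.Norms.L2Operator

noncomputable section

/-- The `α`-twisted cocycle generated by `A` over `f`, at nonnegative times. -/
def twcN {M G : Type*} [Group G] (f : Equiv.Perm M) (α : MulAut G) (A : M → G) :
    ℕ → M → G
  | 0, _ => 1
  | n + 1, x => A ((f ^ n) x) * α (twcN f α A n x)

/-- The `α`-twisted cocycle generated by `A` over `f`, at all integer times. -/
def twc {M G : Type*} [Group G] (f : Equiv.Perm M) (α : MulAut G) (A : M → G) :
    ℤ → M → G
  | Int.ofNat n, x => twcN f α A n x
  | Int.negSucc n, x =>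
      (α ^ (Int.negSucc n)) ((twcN f α A (n + 1) ((f ^ (Int.negSucc n)) x))⁻¹)

/-- The local stable set `W^s_ε(x)`. -/
def localStable {M : Type*} [MetricSpace M] (f : Equiv.Perm M) (ε : ℝ) (x : M) :
    Set M :=
  {y | ∀ n : ℕ, dist ((f ^ n) x) ((f ^ n) y) ≤ ε}

/-- The local unstable set `W^u_ε(x)`. -/
def localUnstable {M : Type*} [MetricSpace M] (f : Equiv.Perm M) (ε : ℝ) (x : M) :
    Set M :=
  {y | ∀ n : ℕ, dist ((f⁻¹ ^ n) x) ((f⁻¹ ^ n) y) ≤ ε}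

/-- The global stable set `W^s(x) = ⋃_{n ≥ 0} f^{-n}(W^s_ε(f^n(x)))`. -/
def globalStable {M : Type*} [MetricSpace M] (f : Equiv.Perm M) (ε : ℝ) (x : M) :
    Set M :=
  {y | ∃ n : ℕ, (f ^ n) y ∈ localStable f ε ((f ^ n) x)}

/-- The global unstable set `W^u(x) = ⋃_{n ≥ 0} f^{n}(W^u_ε(f^{-n}(x)))`. -/
def globalUnstable {M : Type*} [MetricSpace M] (f : Equiv.Perm M) (ε : ℝ) (x : M) :
    Set M :=
  {y | ∃ n : ℕ, (f⁻¹ ^ n) y ∈ localUnstable f ε ((f⁻¹ ^ n) x)}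

/-- `f` is a hyperbolic homeomorphism with local product structure, with constants
`C, ε, λ, τ`. -/
structure IsHyperbolicLPS {M : Type*} [MetricSpace M] (f : M ≃ₜ M)
    (C ε lam τ : ℝ) : Prop where
  C_pos : 0 < C
  eps_pos : 0 < ε
  lam_pos : 0 < lam
  tau_pos : 0 < τ
  stable_contr : ∀ x y₁ y₂ : M, y₁ ∈ localStable f.toEquiv ε x →
    y₂ ∈ localStable f.toEquiv ε x → ∀ n : ℕ,
      dist ((f.toEquiv ^ n) y₁) ((f.toEquiv ^ n) y₂) ≤
        C * Real.exp (-lam * n) * dist y₁ y₂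
  unstable_contr : ∀ x y₁ y₂ : M, y₁ ∈ localUnstable f.toEquiv ε x →
    y₂ ∈ localUnstable f.toEquiv ε x → ∀ n : ℕ,
      dist ((f.toEquiv⁻¹ ^ n) y₁) ((f.toEquiv⁻¹ ^ n) y₂) ≤
        C * Real.exp (-lam * n) * dist y₁ y₂
  bracket : ∃ br : {p : M × M // dist p.1 p.2 ≤ τ} → M, Continuous br ∧
    ∀ p : {p : M × M // dist p.1 p.2 ≤ τ},
      localStable f.toEquiv ε p.1.1 ∩ localUnstable f.toEquiv ε p.1.2 = {br p}

/-- `A` is `ν`-Hölder continuous (w.r.t. the operator norm on matrices). -/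
def IsHolder {M : Type*} [MetricSpace M] {d : ℕ} (ν : ℝ)
    (A : M → GL (Fin d) ℝ) : Prop :=
  ∃ C > 0, ∀ x y : M,
    ‖(A x : Matrix (Fin d) (Fin d) ℝ) - (A y : Matrix (Fin d) (Fin d) ℝ)‖ ≤
      C * dist x y ^ ν

/-- The fiber-bunching inequalities (i), (ii), (iii) with constants `ρ, θ`. -/
def FiberBunchedWith {M : Type*} [MetricSpace M] {d : ℕ} (f : Equiv.Perm M)
    (α : MulAut (GL (Fin d) ℝ)) (A : M → GL (Fin d) ℝ) (ρ θ : ℝ) : Prop :=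
  ∃ C > 0,
    (∀ (n : ℤ) (x : M),
      ‖(((α ^ (-n)) (twc f α A n x) : GL (Fin d) ℝ) : Matrix (Fin d) (Fin d) ℝ)‖ *
        ‖(((α ^ (-n)) ((twc f α A n x)⁻¹) : GL (Fin d) ℝ) : Matrix (Fin d) (Fin d) ℝ)‖ <
        C * Real.exp (θ * |(n : ℝ)|)) ∧
    (∀ (n : ℤ) (T₁ T₂ : GL (Fin d) ℝ),
      ‖(((α ^ n) T₁ : GL (Fin d) ℝ) : Matrix (Fin d) (Fin d) ℝ) -
          (((α ^ n) T₂ : GL (Fin d) ℝ) : Matrix (Fin d) (Fin d) ℝ)‖ ≤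
        C * Real.exp (ρ * |(n : ℝ)|) *
          ‖(T₁ : Matrix (Fin d) (Fin d) ℝ) - (T₂ : Matrix (Fin d) (Fin d) ℝ)‖) ∧
    (∀ (n : ℤ) (T : GL (Fin d) ℝ),
      ‖(((α ^ n) T : GL (Fin d) ℝ) : Matrix (Fin d) (Fin d) ℝ)‖ ≤
        C * Real.exp (ρ * |(n : ℝ)|) * ‖(T : Matrix (Fin d) (Fin d) ℝ)‖)

/-- The twisted cocycle generated by `A` is fiber-bunched. -/
def FiberBunched {M : Type*} [MetricSpace M] {d : ℕ} (f : Equiv.Perm M)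
    (α : MulAut (GL (Fin d) ℝ)) (A : M → GL (Fin d) ℝ) (ν lam : ℝ) : Prop :=
  ∃ ρ θ : ℝ, 0 < ρ ∧ 0 < θ ∧ 5 * ρ + 2 * θ < ν * lam ∧ FiberBunchedWith f α A ρ θ

/-- `H` is the stable holonomy `H^{s,A,α}_{a b}`. -/
def IsStableHol {M : Type*} [MetricSpace M] {d : ℕ} (f : Equiv.Perm M)
    (α : MulAut (GL (Fin d) ℝ)) (A : M → GL (Fin d) ℝ) (a b : M)
    (H : GL (Fin d) ℝ) : Prop :=
  Filter.Tendsto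
    (fun n : ℕ =>
      (((α ^ (-(n : ℤ))) ((twc f α A n b)⁻¹ * twc f α A n a) : GL (Fin d) ℝ) :
        Matrix (Fin d) (Fin d) ℝ))
    Filter.atTop (nhds (H : Matrix (Fin d) (Fin d) ℝ))

/-- `H` is the unstable holonomy `H^{u,A,α}_{a b}`. -/
def IsUnstableHol {M : Type*} [MetricSpace M] {d : ℕ} (f : Equiv.Perm M)
    (α : MulAut (GL (Fin d) ℝ)) (A : M → GL (Fin d) ℝ) (a b : M)
    (H : GL (Fin d) ℝ) : Prop :=
  Filter.Tendsto
    (fun n : ℕ =>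
      (((α ^ (n : ℤ)) ((twc f α A (-(n : ℤ)) b)⁻¹ * twc f α A (-(n : ℤ)) a) :
          GL (Fin d) ℝ) : Matrix (Fin d) (Fin d) ℝ))
    Filter.atTop (nhds (H : Matrix (Fin d) (Fin d) ℝ))

end

/-!
Write `H_n = α^{-n}(A_α^n(z)⁻¹ A_α^n(y))`. Unfolding one step of the cocycle gives
`H_{n+1} - H_n = α^{-n}(A_α^n(z)⁻¹) (Q_n - 1) α^{-n}(A_α^n(z)) H_n` with
`Q_n = α^{-(n+1)}(A(fⁿz)⁻¹ A(fⁿy))`. Fiber bunching (i) bounds the two outer factors by `e^{θn}`;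
fiber bunching (ii), Hölder continuity of `A` and the contraction along `W^s_ε(y)` bound
`‖Q_n - 1‖` by a multiple of `e^{(ρ - νλ)n} d(z,y)^ν`. Thus the increments are at most
`e^{(ρ+θ-νλ)n} d(z,y)^ν ‖H_n‖`, and a discrete Grönwall argument bounds `‖H_n‖` uniformly in `n`
and `z`. This gives the estimate even with the better rate `ρ + θ - νλ`.
-/

theorem norm_le_mul_exp_of_norm_succ_sub_le {E : Type*} [SeminormedAddCommGroup E]
    {u : ℕ → E} {c r : ℝ} (hc : 0 ≤ c) (hr₀ : 0 ≤ r) (hr₁ : r < 1)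
    (hu : ∀ n, ‖u (n + 1) - u n‖ ≤ c * r ^ n * ‖u n‖) (n : ℕ) :
    ‖u n‖ ≤ ‖u 0‖ * Real.exp (c / (1 - r)) := by
  have partial_sum : ∀ n, ‖u n‖ ≤ ‖u 0‖ * Real.exp (c * ∑ k ∈ Finset.range n, r ^ k) := by
    intro n
    induction n with
    | zero => simp
    | succ n ih =>
      calc ‖u (n + 1)‖ ≤ ‖u n‖ + ‖u (n + 1) - u n‖ := norm_le_insert' _ _
        _ ≤ (1 + c * r ^ n) * ‖u n‖ := by linarith [hu n]
        _ ≤ Real.exp (c * r ^ n) * (‖u 0‖ * Real.exp (c * ∑ k ∈ Finset.range n, r ^ k)) :=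
          mul_le_mul (by linarith [Real.add_one_le_exp (c * r ^ n)]) ih (norm_nonneg _)
            (Real.exp_pos _).le
        _ = ‖u 0‖ * Real.exp (c * ∑ k ∈ Finset.range (n + 1), r ^ k) := by
          rw [Finset.sum_range_succ, mul_add, Real.exp_add]
          ring
  have geom : ∑ k ∈ Finset.range n, r ^ k ≤ 1 / (1 - r) := by
    simpa using geom_sum_Ico_le_of_lt_one (m := 0) (n := n) hr₀ hr₁
  calc ‖u n‖ ≤ ‖u 0‖ * Real.exp (c * ∑ k ∈ Finset.range n, r ^ k) := partial_sum n
    _ ≤ ‖u 0‖ * Real.exp (c / (1 - r)) := by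
      rw [div_eq_mul_one_div c]
      gcongr

section NormedRing

variable {R : Type*} [NormedRing R]

theorem norm_mul_mul_sub_mul_le (p q r : R) : ‖p * q * r - p * r‖ ≤ ‖p‖ * ‖q - 1‖ * ‖r‖ := by
  rw [show p * q * r - p * r = p * (q - 1) * r by noncomm_ring]
  exact norm_mul₃_le

theorem Units.norm_val_inv_mul_sub_one_le (a b : Rˣ) :
    ‖((a⁻¹ * b : Rˣ) : R) - 1‖ ≤ ‖((a⁻¹ : Rˣ) : R)‖ * ‖(b : R) - a‖ := by
  rw [Units.val_mul, ← Units.inv_mul a, ← mul_sub]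
  exact norm_mul_le _ _

theorem exists_pos_norm_val_inv_le [CompleteSpace R] {M : Type*} [TopologicalSpace M]
    [CompactSpace M] {g : M → Rˣ} (hg : Continuous fun x => (g x : R)) :
    ∃ K > 0, ∀ x, ‖(((g x)⁻¹ : Rˣ) : R)‖ ≤ K := by
  have hinv : Continuous fun x => Ring.inverse (g x : R) :=
    continuous_iff_continuousAt.2 fun x =>
      (NormedRing.inverse_continuousAt (g x)).comp (f := fun x => (g x : R)) hg.continuousAt
  simp only [Ring.inverse_unit] at hinv
  obtain ⟨K, hK, hbound⟩ := (isCompact_range hinv).isBounded.exists_pos_norm_le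
  exact ⟨K, hK, fun x => hbound _ ⟨x, rfl⟩⟩

end NormedRing

section Holonomy

variable {M G : Type*} [Group G] (f : Equiv.Perm M) (α : MulAut G) (A : M → G)

/-- `IsStableHol f α A y z H` says that these approximants converge to `H`. -/
def holonomyApprox (y z : M) (n : ℕ) : G :=
  (α ^ (-(n : ℤ))) ((twc f α A n z)⁻¹ * twc f α A n y)

theorem twc_natCast (n : ℕ) (x : M) : twc f α A n x = twcN f α A n x := rfl

theorem holonomyApprox_zero (y z : M) : holonomyApprox f α A y z 0 = 1 := by
  simp only [holonomyApprox, twc_natCast, twcN, inv_one, mul_one, map_one]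

theorem map_twc_eq_mul_holonomyApprox (y z : M) (n : ℕ) :
    (α ^ (-(n : ℤ))) (twc f α A n y) =
      (α ^ (-(n : ℤ))) (twc f α A n z) * holonomyApprox f α A y z n := by
  rw [holonomyApprox, ← map_mul, mul_inv_cancel_left]

theorem holonomyApprox_succ (y z : M) (n : ℕ) :
    holonomyApprox f α A y z (n + 1) =
      (α ^ (-(n : ℤ))) ((twc f α A n z)⁻¹) *
        (α ^ (-((n : ℤ) + 1))) ((A ((f ^ n) z))⁻¹ * A ((f ^ n) y)) *
          (α ^ (-(n : ℤ))) (twc f α A n y) := by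
  have shift : ∀ g : G, (α ^ (-((n : ℤ) + 1))) (α g) = (α ^ (-(n : ℤ))) g := fun g => by
    rw [← MulAut.mul_apply, ← zpow_add_one]
    congr 2
    ring
  rw [holonomyApprox, twc_natCast, twc_natCast]
  simp only [twcN, twc_natCast, Nat.cast_succ, mul_inv_rev, map_mul, map_inv, shift, mul_assoc]

end Holonomy

theorem norm_holonomyApprox_succ_sub_le {M R : Type*} [NormedRing R] (f : Equiv.Perm M)
    (α : MulAut Rˣ) (A : M → Rˣ) (y z : M) (n : ℕ) :
    ‖(holonomyApprox f α A y z (n + 1)).val - (holonomyApprox f α A y z n).val‖ ≤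
      ‖((α ^ (-(n : ℤ))) (twc f α A n z) : R)‖ *
        ‖((α ^ (-(n : ℤ))) ((twc f α A n z)⁻¹) : R)‖ *
        ‖((α ^ (-((n : ℤ) + 1))) ((A ((f ^ n) z))⁻¹ * A ((f ^ n) y)) : R) - 1‖ *
        ‖(holonomyApprox f α A y z n).val‖ := by
  set H := (holonomyApprox f α A y z n).val
  set P := ((α ^ (-(n : ℤ))) ((twc f α A n z)⁻¹) : R)
  set Q := ((α ^ (-((n : ℤ) + 1))) ((A ((f ^ n) z))⁻¹ * A ((f ^ n) y)) : R)
  set Z := ((α ^ (-(n : ℤ))) (twc f α A n z) : R)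
  have hPZ : P * Z = 1 := by
    rw [← Units.val_mul, ← map_mul, inv_mul_cancel, map_one, Units.val_one]
  calc _ = ‖P * Q * (Z * H) - P * (Z * H)‖ := by
        congr 2
        · rw [holonomyApprox_succ, Units.val_mul, Units.val_mul,
            map_twc_eq_mul_holonomyApprox f α A y z, Units.val_mul]
        · rw [← mul_assoc, hPZ, one_mul]
    _ ≤ ‖P‖ * ‖Q - 1‖ * ‖Z * H‖ := norm_mul_mul_sub_mul_le _ _ _
    _ ≤ ‖P‖ * ‖Q - 1‖ * (‖Z‖ * ‖H‖) := by gcongr; exact norm_mul_le _ _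
    _ = ‖Z‖ * ‖P‖ * ‖Q - 1‖ * ‖H‖ := by ring

section GeneralLinear

variable {M : Type*} [MetricSpace M] {d : ℕ}

theorem IsHolder.continuous {ν : ℝ} {A : M → GL (Fin d) ℝ} (hA : IsHolder ν A) (hν : 0 < ν) :
    Continuous fun x => (A x : Matrix (Fin d) (Fin d) ℝ) := by
  obtain ⟨CA, -, hCA⟩ := hA
  refine continuous_iff_continuousAt.2 fun x => tendsto_iff_norm_sub_tendsto_zero.2 ?_
  have hbound : Continuous fun y => CA * dist y x ^ ν :=
    continuous_const.mul ((continuous_id.dist continuous_const).rpow_const fun _ => Or.inr hν.le)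
  refine squeeze_zero (fun _ => norm_nonneg _) (fun y => hCA y x) ?_
  simpa [Real.zero_rpow hν.ne'] using hbound.tendsto x

theorem FiberBunchedWith.exists_norm_holonomyApprox_succ_sub_le [CompactSpace M]
    {f : Equiv.Perm M} {α : MulAut (GL (Fin d) ℝ)} {A : M → GL (Fin d) ℝ} {ν ρ θ : ℝ}
    (hFB : FiberBunchedWith f α A ρ θ) (hν : 0 < ν) (hA : IsHolder ν A) :
    ∃ L ≥ 0, ∀ y z : M, ∀ n : ℕ,
      ‖(holonomyApprox f α A y z (n + 1)).val -
          (holonomyApprox f α A y z n).val‖ ≤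
        L * Real.exp ((ρ + θ) * n) * dist ((f ^ n) z) ((f ^ n) y) ^ ν *
          ‖(holonomyApprox f α A y z n).val‖ := by
  obtain ⟨K, hK, hKbound⟩ := exists_pos_norm_val_inv_le (hA.continuous hν)
  obtain ⟨CA, hCA, hHolder⟩ := hA
  obtain ⟨CF, hCF, hcond, hlip, -⟩ := hFB
  refine ⟨CF * CF * Real.exp ρ * K * CA, by positivity, fun y z n => ?_⟩
  have hcond_n := (hcond n z).le
  have hlip_n := hlip (-((n : ℤ) + 1)) ((A ((f ^ n) z))⁻¹ * A ((f ^ n) y)) 1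
  have hjump : ‖((A ((f ^ n) z))⁻¹ * A ((f ^ n) y)).val - (1 : GL (Fin d) ℝ).val‖ ≤
      K * (CA * dist ((f ^ n) z) ((f ^ n) y) ^ ν) := by
    refine (Units.norm_val_inv_mul_sub_one_le _ _).trans ?_
    rw [dist_comm]
    exact mul_le_mul (hKbound _) (hHolder _ _) (norm_nonneg _) hK.le
  have habs : |((-((n : ℤ) + 1) : ℤ) : ℝ)| = n + 1 := by
    push_cast
    rw [abs_neg, abs_of_nonneg (by positivity)]
  simp only [Int.cast_natCast, Nat.abs_cast, map_one, habs] at hcond_n hlip_n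
  calc _ ≤ _ := norm_holonomyApprox_succ_sub_le f α A y z n
    _ ≤ CF * Real.exp (θ * n) *
          (CF * Real.exp (ρ * (n + 1)) * (K * (CA * dist ((f ^ n) z) ((f ^ n) y) ^ ν))) *
          ‖(holonomyApprox f α A y z n).val‖ := by
      gcongr
      exact hlip_n.trans (by gcongr)
    _ = _ := by
      rw [mul_add_one, add_mul, Real.exp_add, Real.exp_add]
      ring

theorem dist_le_of_mem_localStable {f : Equiv.Perm M} {ε : ℝ} {y z : M}
    (hz : z ∈ localStable f ε y) : dist z y ≤ ε := by
  simpa [dist_comm] using hz 0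

theorem IsHyperbolicLPS.dist_pow_apply_rpow_le {f : M ≃ₜ M} {C ε lam τ : ℝ}
    (hf : IsHyperbolicLPS f C ε lam τ) {ν : ℝ} (hν : 0 ≤ ν) {y z : M}
    (hz : z ∈ localStable f.toEquiv ε y) (n : ℕ) :
    dist ((f.toEquiv ^ n) z) ((f.toEquiv ^ n) y) ^ ν ≤
      C ^ ν * Real.exp (-(ν * lam) * n) * dist z y ^ ν := by
  have hy : y ∈ localStable f.toEquiv ε y := fun _ => by simpa using hf.eps_pos.le
  have hC := hf.C_pos
  calc _ ≤ (C * Real.exp (-lam * n) * dist z y) ^ ν :=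
        Real.rpow_le_rpow dist_nonneg (hf.stable_contr y z y hz hy n) hν
    _ = _ := by
      rw [Real.mul_rpow (by positivity) dist_nonneg, Real.mul_rpow hC.le (by positivity),
        ← Real.exp_mul]
      ring_nf

theorem IsHyperbolicLPS.exists_norm_holonomyApprox_succ_sub_le [CompactSpace M] {f : M ≃ₜ M}
    {C ε lam τ : ℝ} (hf : IsHyperbolicLPS f C ε lam τ) {α : MulAut (GL (Fin d) ℝ)}
    {A : M → GL (Fin d) ℝ} {ν ρ θ : ℝ} (hν : 0 < ν) (hA : IsHolder ν A)
    (hFB : FiberBunchedWith f.toEquiv α A ρ θ) (hlt : ρ + θ < ν * lam) :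
    ∃ C' > 0, ∀ y : M, ∀ z ∈ localStable f.toEquiv ε y, ∀ n : ℕ,
      ‖(holonomyApprox f.toEquiv α A y z (n + 1)).val -
          (holonomyApprox f.toEquiv α A y z n).val‖ ≤
        C' * Real.exp ((ρ + θ - ν * lam) * n) * dist z y ^ ν := by
  obtain ⟨L, hL, hstep⟩ := hFB.exists_norm_holonomyApprox_succ_sub_le hν hA
  have hC := hf.C_pos
  set r := Real.exp (ρ + θ - ν * lam)
  have hr : r < 1 := Real.exp_lt_one_iff.2 (by linarith)
  have hexp (n : ℕ) : Real.exp ((ρ + θ - ν * lam) * n) = r ^ n := by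
    rw [mul_comm, Real.exp_nat_mul]
  set K := ‖(1 : Matrix (Fin d) (Fin d) ℝ)‖ * Real.exp (L * C ^ ν * ε ^ ν / (1 - r))
  refine ⟨L * C ^ ν * K + 1, by positivity, fun y z hz => ?_⟩
  have hdist : dist z y ^ ν ≤ ε ^ ν :=
    Real.rpow_le_rpow dist_nonneg (dist_le_of_mem_localStable hz) hν.le
  have hincr (n : ℕ) :
      ‖(holonomyApprox f.toEquiv α A y z (n + 1)).val -
          (holonomyApprox f.toEquiv α A y z n).val‖ ≤
        L * C ^ ν * dist z y ^ ν * r ^ n *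
          ‖(holonomyApprox f.toEquiv α A y z n).val‖ := by
    refine (hstep y z n).trans ?_
    calc _ ≤ L * Real.exp ((ρ + θ) * n) * (C ^ ν * Real.exp (-(ν * lam) * n) * dist z y ^ ν) *
          ‖(holonomyApprox f.toEquiv α A y z n).val‖ := by
          gcongr
          exact hf.dist_pow_apply_rpow_le hν.le hz n
      _ = _ := by
        rw [← hexp, sub_mul, sub_eq_add_neg, Real.exp_add, neg_mul]
        ring
  have hbdd (n : ℕ) :
      ‖(holonomyApprox f.toEquiv α A y z n).val‖ ≤ K := by
    refine (norm_le_mul_exp_of_norm_succ_sub_le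
      (u := fun n => (holonomyApprox f.toEquiv α A y z n).val)
      (by positivity) (by positivity) hr hincr n).trans ?_
    rw [holonomyApprox_zero, Units.val_one]
    have hr' : 0 < 1 - r := by linarith
    exact mul_le_mul_of_nonneg_left (Real.exp_le_exp.2 (by gcongr)) (norm_nonneg _)
  intro n
  calc _ ≤ L * C ^ ν * dist z y ^ ν * r ^ n * K := (hincr n).trans (by gcongr; exact hbdd n)
    _ = L * C ^ ν * K * r ^ n * dist z y ^ ν := by ring
    _ ≤ _ := by
      rw [hexp]
      gcongr
      linarith

end GeneralLinear

/-- **Cauchy estimate for the holonomy sequence.** There is `C' > 0` such that for every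
`y` and every `z ∈ W^s_ε(y)`,
`‖α^{-(n+1)}(A_α^{n+1}(z)⁻¹ A_α^{n+1}(y)) − α^{-n}(A_α^n(z)⁻¹ A_α^n(y))‖
  ≤ C' e^{(5ρ+2θ+δ−νλ)n} d(z,y)^ν`; in particular the sequence is Cauchy. -/
theorem holonomy_sequence_cauchy {M : Type*} [MetricSpace M] [CompactSpace M] {d : ℕ}
    (f : M ≃ₜ M) (C ε lam τ ν : ℝ) (hν : 0 < ν)
    (hf : IsHyperbolicLPS f C ε lam τ)
    (A : M → GL (Fin d) ℝ) (α : MulAut (GL (Fin d) ℝ))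
    (hA : IsHolder ν A) (ρ θ δ : ℝ) (hρ : 0 < ρ) (hθ : 0 < θ) (hδ : 0 < δ)
    (hFB : FiberBunchedWith f.toEquiv α A ρ θ)
    (hlt : 5 * ρ + 2 * θ + δ < ν * lam) :
    ∃ C' > 0, ∀ y : M, ∀ z ∈ localStable f.toEquiv ε y,
      (∀ n : ℕ,
        ‖(((α ^ (-(n + 1 : ℤ)))
              ((twc f.toEquiv α A (n + 1 : ℤ) z)⁻¹ * twc f.toEquiv α A (n + 1 : ℤ) y) :
            GL (Fin d) ℝ) : Matrix (Fin d) (Fin d) ℝ) -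
          (((α ^ (-(n : ℤ)))
              ((twc f.toEquiv α A n z)⁻¹ * twc f.toEquiv α A n y) :
            GL (Fin d) ℝ) : Matrix (Fin d) (Fin d) ℝ)‖ ≤
          C' * Real.exp ((5 * ρ + 2 * θ + δ - ν * lam) * n) * dist z y ^ ν) ∧
      CauchySeq (fun n : ℕ =>
        (((α ^ (-(n : ℤ))) ((twc f.toEquiv α A n z)⁻¹ * twc f.toEquiv α A n y) :
          GL (Fin d) ℝ) : Matrix (Fin d) (Fin d) ℝ)) := by
  obtain ⟨C', hC', hstep⟩ := hf.exists_norm_holonomyApprox_succ_sub_le hν hA hFB (by linarith)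
  have hrate : ρ + θ - ν * lam < 0 := by linarith
  refine ⟨C', hC', fun y z hz => ⟨fun n => ?_, ?_⟩⟩
  · have hweaker : (ρ + θ - ν * lam) * n ≤ (5 * ρ + 2 * θ + δ - ν * lam) * n :=
      mul_le_mul_of_nonneg_right (by linarith) n.cast_nonneg
    simpa only [holonomyApprox, Nat.cast_succ] using
      (hstep y z hz n).trans (by gcongr)
  · refine cauchySeq_of_le_geometric _ (C' * dist z y ^ ν) (Real.exp_lt_one_iff.2 hrate)
      fun n => ?_
    rw [dist_comm, dist_eq_norm, ← Real.exp_nat_mul, mul_right_comm, mul_comm (n : ℝ)]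
    simpa only [holonomyApprox, Nat.cast_succ] using hstep y z hz n
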